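/- Let Δ be a 2-local spatial derivation on L implemented by elements from F(Ω, B_sk(H)) and let i, j, p be pairwise distinct natural numbers. If a, b ∈ F(Ω, B_sk(H)) satisfy Δ(s_{i,p}) = [a, s_{i,p}] and Δ(s_{p,j}) = [b, s_{p,j}], then ê_{i,i} a ê_{j,j} = ê_{i,i} b ê_{j,j} and ê_{j,j} a ê_{i,i} = ê_{j,j} b ê_{i,i}; equivalently a^{i,j} = b^{i,j} and a^{j,i} = b^{j,i} (as functions on Ω). -/

import Mathlib

/-- The matrix unit `e_{i,j} ∈ B(H)` associated with an orthonormal basis `(e_n)`: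
the rank-one operator `v ↦ ⟨v, e_j⟩ e_i` (inner product linear in `v`). -/
noncomputable def matUnit {H : Type*} [NormedAddCommGroup H] [InnerProductSpace ℂ H]
    (e : HilbertBasis ℕ ℂ H) (i j : ℕ) : H →L[ℂ] H :=
  (innerSL ℂ (e j)).smulRight (e i)

lemma matUnit_apply {H : Type*} [NormedAddCommGroup H] [InnerProductSpace ℂ H]
    (e : HilbertBasis ℕ ℂ H) (i j : ℕ) (v : H) :
    matUnit e i j v = (inner ℂ (e j) v : ℂ) • e i := rfl

lemma hon {H : Type*} [NormedAddCommGroup H] [InnerProductSpace ℂ H]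
    (e : HilbertBasis ℕ ℂ H) (i j : ℕ) :
    (inner ℂ (e i) (e j) : ℂ) = if i = j then 1 else 0 :=
  orthonormal_iff_ite.mp e.orthonormal i j

lemma comm_entry {H : Type*} [NormedAddCommGroup H] [InnerProductSpace ℂ H]
    (e : HilbertBasis ℕ ℂ H) (i p k l : ℕ) (d : H →L[ℂ] H) :
    (inner ℂ (e k) ((d * (matUnit e i p - matUnit e p i)
        - (matUnit e i p - matUnit e p i) * d) (e l)) : ℂ)
    = (if p = l then 1 else 0) * inner ℂ (e k) (d (e i))
      - (if i = l then 1 else 0) * inner ℂ (e k) (d (e p))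
      - (if k = i then 1 else 0) * inner ℂ (e p) (d (e l))
      + (if k = p then 1 else 0) * inner ℂ (e i) (d (e l)) := by
  simp only [ContinuousLinearMap.sub_apply, ContinuousLinearMap.mul_apply, matUnit_apply,
    inner_sub_right, inner_smul_right, map_sub, map_smul, hon]
  ring

lemma sandwich {H : Type*} [NormedAddCommGroup H] [InnerProductSpace ℂ H]
    (e : HilbertBasis ℕ ℂ H) (i j : ℕ) (x y : H →L[ℂ] H)
    (h : (inner ℂ (e i) (x (e j)) : ℂ) = inner ℂ (e i) (y (e j))) :
    matUnit e i i * x * matUnit e j j = matUnit e i i * y * matUnit e j j := by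
  ext v
  simp only [ContinuousLinearMap.mul_apply, matUnit_apply, map_smul, inner_smul_right, h]

/-- **Lemma 4.2 (Ayupov–Arzikulov–Umrzaqov).**
Let `L ⊆ F(Ω, B_sk(H))` be a Lie subalgebra containing `x_o` and the family
`{I·ê_{i,i}} ∪ {s_{i,j} : i ≠ j}`, and let `Δ` be a 2-local spatial derivation on `L`
implemented by elements of `F(Ω, B_sk(H))`.  If `i, j, p` are pairwise distinct and
`a, b ∈ F(Ω, B_sk(H))` satisfy `Δ(s_{i,p}) = [a, s_{i,p}]` and
`Δ(s_{p,j}) = [b, s_{p,j}]`, then `ê_{i,i} a ê_{j,j} = ê_{i,i} b ê_{j,j}` and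
`ê_{j,j} a ê_{i,i} = ê_{j,j} b ê_{i,i}`; equivalently `a^{i,j} = b^{i,j}` and
`a^{j,i} = b^{j,i}` as functions on `Ω` (here `x^{i,j}(t) = ⟨x(t) e_j, e_i⟩`). -/
theorem two_local_spatial_derivation_offdiagonal_well_defined
    {H : Type*} [NormedAddCommGroup H] [InnerProductSpace ℂ H] [CompleteSpace H]
    (e : HilbertBasis ℕ ℂ H) {Ω : Type*}
    (L : Set (Ω → H →L[ℂ] H))
    (hLskew : ∀ x ∈ L, ∀ t, ContinuousLinearMap.adjoint (x t) = -(x t))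
    (hLadd : ∀ x ∈ L, ∀ y ∈ L, x + y ∈ L)
    (hLsmul : ∀ (r : ℝ), ∀ x ∈ L, r • x ∈ L)
    (hLbracket : ∀ x ∈ L, ∀ y ∈ L, x * y - y * x ∈ L)
    (lam : ℕ → ℝ) (hlam0 : ∀ k, lam k ≠ 0)
    (hlam2 : Summable fun k => lam k ^ 2)
    (xoOp : H →L[ℂ] H)
    (hxoOp : HasSum (fun k => (lam k : ℂ) • (matUnit e k (k + 1) - matUnit e (k + 1) k)) xoOp)
    (hxoL : (fun _ : Ω => xoOp) ∈ L)
    (hdiagL : ∀ i : ℕ, (fun _ : Ω => Complex.I • matUnit e i i) ∈ L)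
    (hsL : ∀ i j : ℕ, i ≠ j → (fun _ : Ω => matUnit e i j - matUnit e j i) ∈ L)
    (Δ : (Ω → H →L[ℂ] H) → (Ω → H →L[ℂ] H))
    (hΔmem : ∀ x ∈ L, Δ x ∈ L)
    (hΔ : ∀ x ∈ L, ∀ y ∈ L, ∃ c : Ω → H →L[ℂ] H,
        (∀ t, ContinuousLinearMap.adjoint (c t) = -(c t)) ∧
        Δ x = c * x - x * c ∧ Δ y = c * y - y * c)
    (i j p : ℕ) (hij : i ≠ j) (hip : i ≠ p) (hjp : j ≠ p)
    (a b : Ω → H →L[ℂ] H)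
    (ha : ∀ t, ContinuousLinearMap.adjoint (a t) = -(a t))
    (hb : ∀ t, ContinuousLinearMap.adjoint (b t) = -(b t))
    (haΔ : Δ (fun _ => matUnit e i p - matUnit e p i)
        = a * (fun _ => matUnit e i p - matUnit e p i)
          - (fun _ => matUnit e i p - matUnit e p i) * a)
    (hbΔ : Δ (fun _ => matUnit e p j - matUnit e j p)
        = b * (fun _ => matUnit e p j - matUnit e j p)
          - (fun _ => matUnit e p j - matUnit e j p) * b) :
    (∀ t, matUnit e i i * a t * matUnit e j j = matUnit e i i * b t * matUnit e j j) ∧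
    (∀ t, matUnit e j j * a t * matUnit e i i = matUnit e j j * b t * matUnit e i i) ∧
    (∀ t, (inner ℂ (e i) (a t (e j)) : ℂ) = inner ℂ (e i) (b t (e j))) ∧
    (∀ t, (inner ℂ (e j) (a t (e i)) : ℂ) = inner ℂ (e j) (b t (e i))) := by
  obtain ⟨c, -, hc1, hc2⟩ := hΔ _ (hsL i p hip) _ (hsL p j (Ne.symm hjp))
  have hA : ∀ t, a t * (matUnit e i p - matUnit e p i)
      - (matUnit e i p - matUnit e p i) * a t
      = c t * (matUnit e i p - matUnit e p i)
      - (matUnit e i p - matUnit e p i) * c t := fun t =>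
    congrFun (haΔ.symm.trans hc1) t
  have hB : ∀ t, b t * (matUnit e p j - matUnit e j p)
      - (matUnit e p j - matUnit e j p) * b t
      = c t * (matUnit e p j - matUnit e j p)
      - (matUnit e p j - matUnit e j p) * c t := fun t =>
    congrFun (hbΔ.symm.trans hc2) t
  have eaij : ∀ t, (inner ℂ (e i) (a t (e j)) : ℂ) = inner ℂ (e i) (c t (e j)) := by
    intro t
    have h := congrArg (fun d : H →L[ℂ] H => (inner ℂ (e p) (d (e j)) : ℂ)) (hA t)
    simp only [comm_entry] at h
    simpa [hij, hip, hjp, (Ne.symm hij), (Ne.symm hip), (Ne.symm hjp)] using h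
  have eaji : ∀ t, (inner ℂ (e j) (a t (e i)) : ℂ) = inner ℂ (e j) (c t (e i)) := by
    intro t
    have h := congrArg (fun d : H →L[ℂ] H => (inner ℂ (e j) (d (e p)) : ℂ)) (hA t)
    simp only [comm_entry] at h
    simpa [hij, hip, hjp, (Ne.symm hij), (Ne.symm hip), (Ne.symm hjp)] using h
  have ebij : ∀ t, (inner ℂ (e i) (b t (e j)) : ℂ) = inner ℂ (e i) (c t (e j)) := by
    intro t
    have h := congrArg (fun d : H →L[ℂ] H => (inner ℂ (e i) (d (e p)) : ℂ)) (hB t)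
    simp only [comm_entry] at h
    simpa [hij, hip, hjp, (Ne.symm hij), (Ne.symm hip), (Ne.symm hjp)] using h
  have ebji : ∀ t, (inner ℂ (e j) (b t (e i)) : ℂ) = inner ℂ (e j) (c t (e i)) := by
    intro t
    have h := congrArg (fun d : H →L[ℂ] H => (inner ℂ (e p) (d (e i)) : ℂ)) (hB t)
    simp only [comm_entry] at h
    simpa [hij, hip, hjp, (Ne.symm hij), (Ne.symm hip), (Ne.symm hjp)] using h
  have eij : ∀ t, (inner ℂ (e i) (a t (e j)) : ℂ) = inner ℂ (e i) (b t (e j)) :=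
    fun t => (eaij t).trans (ebij t).symm
  have eji : ∀ t, (inner ℂ (e j) (a t (e i)) : ℂ) = inner ℂ (e j) (b t (e i)) :=
    fun t => (eaji t).trans (ebji t).symm
  exact ⟨fun t => sandwich e i j _ _ (eij t), fun t => sandwich e j i _ _ (eji t), eij, eji⟩
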